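/- arXiv:1712.06239 — 2 statements merged into one kernel-verified Lean document; each statement's English description precedes it below -/
import Mathlib

section
/- Let F be a finite set of polynomials in C[x_1,...,x_n], H_X = {x_1^2 - x_1,...,x_n^2 - x_n}, and F_B the exponent-reduced version of F (all x_i^m replaced by x_i). Then the complete solving degree of F_B ∪ H_X is at most 3n. -/
open MvPolynomial

/-- Degree reverse lexicographic order (for `x_1 > ⋯ > x_n`): `a < b` iff `a` has smaller
total degree, or degrees are equal and at the largest index where they differ, `a` has the
larger exponent. -/
def DrlLt {n : ℕ} (a b : Fin n →₀ ℕ) : Prop :=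
  (∑ i, a i) < (∑ i, b i) ∨
    ((∑ i, a i) = (∑ i, b i) ∧
      ∃ i : Fin n, b i < a i ∧ ∀ j : Fin n, i < j → a j = b j)

/-- `m` is the leading monomial of `f` with respect to the DRL ordering. -/
def IsLeadingMonomial {n : ℕ} (f : MvPolynomial (Fin n) ℂ) (m : Fin n →₀ ℕ) : Prop :=
  m ∈ f.support ∧ ∀ m' ∈ f.support, m' ≠ m → DrlLt m' m

/-- `G` is a Gröbner basis of the ideal `I` with respect to the DRL ordering. -/
def IsGB {n : ℕ} (I : Ideal (MvPolynomial (Fin n) ℂ))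
    (G : Finset (MvPolynomial (Fin n) ℂ)) : Prop :=
  (G : Set (MvPolynomial (Fin n) ℂ)) ⊆ I ∧
  Ideal.span (G : Set (MvPolynomial (Fin n) ℂ)) = I ∧
  ∀ f ∈ I, f ≠ (0 : MvPolynomial (Fin n) ℂ) →
    ∃ g ∈ G, ∃ mg mf : Fin n →₀ ℕ,
      IsLeadingMonomial g mg ∧ IsLeadingMonomial f mf ∧ ∀ i, mg i ≤ mf i

/-- `G` is the reduced Gröbner basis of `I` for the DRL ordering: a Gröbner basis whose
elements are monic and no monomial of an element is divisible by the leading monomial of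
another element. -/
def IsReducedGB {n : ℕ} (I : Ideal (MvPolynomial (Fin n) ℂ))
    (G : Finset (MvPolynomial (Fin n) ℂ)) : Prop :=
  IsGB I G ∧
  ∀ g ∈ G, ∃ mg : Fin n →₀ ℕ, IsLeadingMonomial g mg ∧ g.coeff mg = 1 ∧
    ∀ m ∈ g.support, ∀ g' ∈ G, g' ≠ g → ∀ mg' : Fin n →₀ ℕ,
      IsLeadingMonomial g' mg' → ¬ ∀ i, mg' i ≤ m i

/-- `F_B`: reduce every exponent in `f` to at most `1`. -/
noncomputable def squarefreePart {n : ℕ} (f : MvPolynomial (Fin n) ℂ) :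
    MvPolynomial (Fin n) ℂ :=
  ∑ m ∈ f.support,
    monomial (Finsupp.mapRange (fun e => min e 1) (by decide) m) (f.coeff m)

/-!
Everything rests on the Boolean Lagrange basis `χ_v = ∏_{v i} X i * ∏_{¬ v i} (1 - X i)`,
`v ∈ {0,1}ⁿ`: it sums to `1`, and `(X i - v i) * χ_v` is a multiple of `X i ^ 2 - X i`, so
`g * χ_v ≡ g(v) * χ_v` modulo the field equations with summands of degree `≤ deg g + n`.

Let `f` be in the ideal with `deg f ≤ D`, `2n ≤ D`. Reducing exponents gives `f ≡ r := f_B`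
with summands of degree `≤ deg f` and `deg r ≤ n`; then `r = ∑_v r * χ_v ≡ ∑_v r(v) * χ_v`
at degree `≤ 2n`. If `r(v) ≠ 0`, some `p ∈ F_B` has `p(v) ≠ 0`, since `r` lies in the ideal
and the field equations vanish at `v`; then
`r(v) * χ_v = (r(v) / p(v)) * (χ_v * p - (p * χ_v - p(v) * χ_v))` has degree `≤ 2n` over the
system. Every `m * g` with `g` in the Gröbner basis lies in the ideal, and `D = 3n`.
-/

namespace MvPolynomial

variable {σ R ι κ : Type*} [CommRing R]

def HasDegreeLERep [Fintype ι] (g : ι → MvPolynomial σ R) (D : ℕ) (f : MvPolynomial σ R) :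
    Prop :=
  ∃ c : ι → MvPolynomial σ R, f = ∑ i, c i * g i ∧ ∀ i, (c i * g i).totalDegree ≤ D

namespace HasDegreeLERep

variable [Fintype ι] {g : ι → MvPolynomial σ R} {D D' : ℕ} {f f' : MvPolynomial σ R}

theorem mono (hf : HasDegreeLERep g D f) (h : D ≤ D') : HasDegreeLERep g D' f :=
  let ⟨c, hc, hcD⟩ := hf
  ⟨c, hc, fun i => (hcD i).trans h⟩

theorem zero : HasDegreeLERep g D 0 :=
  ⟨0, by simp, by simp⟩

theorem add (hf : HasDegreeLERep g D f) (hf' : HasDegreeLERep g D f') :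
    HasDegreeLERep g D (f + f') := by
  obtain ⟨c, rfl, hcD⟩ := hf
  obtain ⟨c', rfl, hc'D⟩ := hf'
  refine ⟨c + c', by simp only [Pi.add_apply, add_mul, Finset.sum_add_distrib], fun i => ?_⟩
  rw [Pi.add_apply, add_mul]
  exact (totalDegree_add _ _).trans (max_le (hcD i) (hc'D i))

theorem neg (hf : HasDegreeLERep g D f) : HasDegreeLERep g D (-f) := by
  obtain ⟨c, rfl, hcD⟩ := hf
  refine ⟨-c, by simp only [Pi.neg_apply, neg_mul, Finset.sum_neg_distrib], fun i => ?_⟩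
  rw [Pi.neg_apply, neg_mul, totalDegree_neg]
  exact hcD i

theorem sub (hf : HasDegreeLERep g D f) (hf' : HasDegreeLERep g D f') :
    HasDegreeLERep g D (f - f') := by
  simpa only [sub_eq_add_neg] using hf.add hf'.neg

theorem sum {α : Type*} (s : Finset α) {F : α → MvPolynomial σ R}
    (h : ∀ a ∈ s, HasDegreeLERep g D (F a)) : HasDegreeLERep g D (∑ a ∈ s, F a) :=
  Finset.sum_induction F _ (fun _ _ => add) zero h

theorem mul_left (q : MvPolynomial σ R) (hf : HasDegreeLERep g D f) :
    HasDegreeLERep g (q.totalDegree + D) (q * f) := by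
  obtain ⟨c, rfl, hcD⟩ := hf
  refine ⟨fun i => q * c i, by simp only [Finset.mul_sum, mul_assoc], fun i => ?_⟩
  rw [mul_assoc]
  exact (totalDegree_mul _ _).trans (Nat.add_le_add_left (hcD i) _)

theorem C_mul (a : R) (hf : HasDegreeLERep g D f) : HasDegreeLERep g D (C a * f) := by
  simpa only [totalDegree_C, zero_add] using hf.mul_left (C a)

theorem of_dvd (i : ι) (hi : g i ∣ f) (hf : f.totalDegree ≤ D) : HasDegreeLERep g D f := by
  classical
  obtain ⟨q, rfl⟩ := hi
  refine ⟨Pi.single i q, ?_, fun j => ?_⟩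
  · rw [Fintype.sum_eq_single i fun j hj => by rw [Pi.single_eq_of_ne hj, zero_mul],
      Pi.single_eq_same, mul_comm]
  · obtain rfl | hj := eq_or_ne j i
    · rwa [Pi.single_eq_same, mul_comm]
    · simp [Pi.single_eq_of_ne hj]

theorem mul_right_of_dvd {g' : ι → MvPolynomial σ R} {q : MvPolynomial σ R}
    (hf : HasDegreeLERep g D f) (hdvd : ∀ i, g' i ∣ g i * q) :
    HasDegreeLERep g' (D + q.totalDegree) (f * q) := by
  obtain ⟨c, rfl, hcD⟩ := hf
  choose r hr using hdvd
  have hc : ∀ i, c i * r i * g' i = c i * g i * q := fun i => by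
    rw [mul_assoc, mul_assoc, hr i]
    ring
  refine ⟨fun i => c i * r i, by simp only [hc, Finset.sum_mul], fun i => ?_⟩
  rw [hc]
  exact (totalDegree_mul _ _).trans (Nat.add_le_add_right (hcD i) _)

theorem comp [Fintype κ] (g : κ → MvPolynomial σ R) (e : ι → κ)
    (hf : HasDegreeLERep (g ∘ e) D f) : HasDegreeLERep g D f := by
  classical
  obtain ⟨c, rfl, hcD⟩ := hf
  refine ⟨fun k => ∑ i : {i // e i = k}, c i, ?_, fun k => ?_⟩
  · simp only [Finset.sum_mul]
    rw [← Fintype.sum_fiberwise e]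
    exact Fintype.sum_congr _ _ fun k => Fintype.sum_congr _ _ fun ⟨i, hi⟩ => by subst hi; rfl
  · rw [Finset.sum_mul]
    refine totalDegree_finsetSum_le fun i _ => ?_
    obtain ⟨i, rfl⟩ := i
    exact hcD i

theorem mem_span (hf : HasDegreeLERep g D f) : f ∈ Ideal.span (Set.range g) := by
  obtain ⟨c, rfl, -⟩ := hf
  exact Ideal.sum_mem _ fun i _ => Ideal.mul_mem_left _ _ (Ideal.subset_span ⟨i, rfl⟩)

end HasDegreeLERep

theorem totalDegree_X_pow_le (i : σ) (k : ℕ) : (X i ^ k : MvPolynomial σ R).totalDegree ≤ k := by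
  simpa [X_pow_eq_monomial] using totalDegree_monomial_le (R := R) (Finsupp.single i k) 1

theorem eq_sum_C_coeff_mul_prod_X_pow [Fintype σ] (f : MvPolynomial σ R) :
    f = ∑ d ∈ f.support, C (f.coeff d) * ∏ i, X i ^ d i := by
  conv_lhs => rw [← eval₂_eta f]
  exact eval₂_eq' _ _ _

theorem hasDegreeLERep_prod_sub_prod [Fintype ι] {g A B : ι → MvPolynomial σ R}
    (h : ∀ i, g i ∣ A i - B i) :
    HasDegreeLERep g (∑ i, max (A i).totalDegree (B i).totalDegree) (∏ i, A i - ∏ i, B i) := by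
  classical
  suffices ∀ s : Finset ι, HasDegreeLERep g (∑ i ∈ s, max (A i).totalDegree (B i).totalDegree)
      (∏ i ∈ s, A i - ∏ i ∈ s, B i) from this .univ
  intro s
  induction s using Finset.induction_on with
  | empty => simpa using HasDegreeLERep.zero
  | insert a s ha ih =>
    have hsplit : ∏ i ∈ insert a s, A i - ∏ i ∈ insert a s, B i =
        (A a - B a) * ∏ i ∈ s, A i + B a * (∏ i ∈ s, A i - ∏ i ∈ s, B i) := by
      rw [Finset.prod_insert ha, Finset.prod_insert ha]
      ring
    rw [hsplit, Finset.sum_insert ha]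
    refine .add (.of_dvd a (dvd_mul_of_dvd_left (h a) _) ?_) ((ih.mul_left (B a)).mono ?_)
    · calc ((A a - B a) * ∏ i ∈ s, A i).totalDegree
          ≤ (A a - B a).totalDegree + ∑ i ∈ s, (A i).totalDegree :=
            (totalDegree_mul _ _).trans (Nat.add_le_add_left (totalDegree_finsetProd _ _) _)
        _ ≤ _ := add_le_add (totalDegree_sub _ _) (Finset.sum_le_sum fun i _ => le_max_left _ _)
    · exact Nat.add_le_add_right (le_max_right _ _) _

theorem HasDegreeLERep.sum_C_coeff_mul [Fintype σ] [Fintype ι] {g : ι → MvPolynomial σ R}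
    (f : MvPolynomial σ R) {φ : (σ →₀ ℕ) → MvPolynomial σ R}
    (h : ∀ d, HasDegreeLERep g (∑ i, d i) (φ d)) :
    HasDegreeLERep g f.totalDegree (∑ d ∈ f.support, C (f.coeff d) * φ d) :=
  .sum _ fun d hd => ((h d).C_mul _).mono <|
    (Finsupp.sum_fintype d (fun _ e => e) fun _ => rfl).symm.trans_le (le_totalDegree hd)

theorem hasDegreeLERep_sub_C_eval [Fintype σ] (w : σ → R) (f : MvPolynomial σ R) :
    HasDegreeLERep (fun i => X i - C (w i)) f.totalDegree (f - C (eval w f)) := by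
  have hf : f - C (eval w f) =
      ∑ d ∈ f.support, C (f.coeff d) * (∏ i, X i ^ d i - ∏ i, C (w i) ^ d i) := by
    rw [eval_eq']
    nth_rw 1 [eq_sum_C_coeff_mul_prod_X_pow f]
    simp only [map_sum, map_mul, map_prod, map_pow, mul_sub, Finset.sum_sub_distrib]
  rw [hf]
  refine .sum_C_coeff_mul f fun d => ?_
  refine (hasDegreeLERep_prod_sub_prod fun i => sub_dvd_pow_sub_pow _ _ _).mono
    (Finset.sum_le_sum fun i _ => max_le (totalDegree_X_pow_le i _) ?_)
  rw [← map_pow, totalDegree_C]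
  exact Nat.zero_le _

theorem exists_eval_ne_zero_of_mem_span {g : ι → MvPolynomial σ R} {f : MvPolynomial σ R}
    (hf : f ∈ Ideal.span (Set.range g)) {x : σ → R} (hx : eval x f ≠ 0) :
    ∃ i, eval x (g i) ≠ 0 := by
  by_contra! h
  exact hx (Ideal.span_le (I := RingHom.ker (eval x)).mpr
    (Set.range_subset_iff.mpr fun i => RingHom.mem_ker.mpr (h i)) hf)

section Boolean

def boolPoint (v : σ → Bool) : σ → R := fun i => if v i then 1 else 0

theorem eval_boolPoint_X_sq_sub_X (v : σ → Bool) (i : σ) :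
    eval (boolPoint v) (X i ^ 2 - X i : MvPolynomial σ R) = 0 := by
  by_cases hv : v i <;> simp [boolPoint, hv]

variable [Fintype σ]

noncomputable def boolIndicator (v : σ → Bool) : MvPolynomial σ R :=
  ∏ i, if v i then X i else 1 - X i

theorem sum_boolIndicator [DecidableEq σ] :
    ∑ v : σ → Bool, (boolIndicator v : MvPolynomial σ R) = 1 := by
  simp only [boolIndicator]
  rw [← Fintype.prod_sum fun i (b : Bool) => if b then (X i : MvPolynomial σ R) else 1 - X i]
  simp

theorem totalDegree_boolIndicator_le (v : σ → Bool) :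
    (boolIndicator v : MvPolynomial σ R).totalDegree ≤ Fintype.card σ := by
  have hX : ∀ i, (X i : MvPolynomial σ R).totalDegree ≤ 1 := fun i =>
    (pow_one (X i : MvPolynomial σ R)) ▸ totalDegree_X_pow_le i 1
  refine (totalDegree_finsetProd _ _).trans ?_
  refine (Finset.sum_le_card_nsmul _ _ 1 fun i _ => ?_).trans (by simp)
  split
  · exact hX i
  · exact (totalDegree_sub _ _).trans (max_le (by simp) (hX i))

theorem X_sq_sub_X_dvd_X_sub_C_mul_boolIndicator (v : σ → Bool) (i : σ) :
    X i ^ 2 - X i ∣ (X i - C (boolPoint v i)) * (boolIndicator v : MvPolynomial σ R) := by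
  classical
  rw [boolIndicator, ← Finset.mul_prod_erase _ _ (Finset.mem_univ i), ← mul_assoc]
  refine dvd_mul_of_dvd_left ?_ _
  by_cases hv : v i
  · exact ⟨1, by simp [boolPoint, hv]; ring⟩
  · exact ⟨-1, by simp [boolPoint, hv]; ring⟩

theorem hasDegreeLERep_mul_boolIndicator_sub (v : σ → Bool) (f : MvPolynomial σ R) :
    HasDegreeLERep (fun i => X i ^ 2 - X i) (f.totalDegree + Fintype.card σ)
      (f * boolIndicator v - C (eval (boolPoint v) f) * boolIndicator v) := by
  rw [← sub_mul]
  exact ((hasDegreeLERep_sub_C_eval _ f).mul_right_of_dvd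
    (X_sq_sub_X_dvd_X_sub_C_mul_boolIndicator v)).mono
    (Nat.add_le_add_left (totalDegree_boolIndicator_le v) _)

end Boolean

end MvPolynomial

theorem sq_sub_self_dvd_pow_sub_pow_min_one {R : Type*} [CommRing R] (x : R) (k : ℕ) :
    x ^ 2 - x ∣ x ^ k - x ^ min k 1 := by
  rcases k with _ | k
  · simp
  rw [min_eq_right (by omega), pow_one, show x ^ (k + 1) - x = x * (x ^ k - 1) by ring,
    show x ^ 2 - x = x * (x - 1) by ring]
  exact mul_dvd_mul_left x (by simpa using sub_dvd_pow_sub_pow x 1 k)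

section BooleanSystem

variable {n : ℕ}

theorem squarefreePart_eq_sum (f : MvPolynomial (Fin n) ℂ) :
    squarefreePart f = ∑ d ∈ f.support, C (f.coeff d) * ∏ i, X i ^ min (d i) 1 :=
  Finset.sum_congr rfl fun d _ => by rw [monomial_eq, Finsupp.prod_pow]; rfl

theorem totalDegree_squarefreePart_le (f : MvPolynomial (Fin n) ℂ) :
    (squarefreePart f).totalDegree ≤ n := by
  rw [squarefreePart_eq_sum]
  refine totalDegree_finsetSum_le fun d _ => (totalDegree_mul _ _).trans ?_
  rw [totalDegree_C, zero_add]
  refine (totalDegree_finsetProd _ _).trans ((Finset.sum_le_card_nsmul _ _ 1 fun i _ =>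
    (totalDegree_X_pow_le i _).trans (min_le_right _ _)).trans (by simp))

theorem hasDegreeLERep_sub_squarefreePart (f : MvPolynomial (Fin n) ℂ) :
    HasDegreeLERep (fun i => X i ^ 2 - X i) f.totalDegree (f - squarefreePart f) := by
  have hf : f - squarefreePart f =
      ∑ d ∈ f.support, C (f.coeff d) * (∏ i, X i ^ d i - ∏ i, X i ^ min (d i) 1) := by
    rw [squarefreePart_eq_sum]
    nth_rw 1 [eq_sum_C_coeff_mul_prod_X_pow f]
    simp only [mul_sub, Finset.sum_sub_distrib]
  rw [hf]
  exact .sum_C_coeff_mul f fun d =>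
    (hasDegreeLERep_prod_sub_prod fun i => sq_sub_self_dvd_pow_sub_pow_min_one (X i) (d i)).mono
      (Finset.sum_le_sum fun i _ => max_le (totalDegree_X_pow_le i _)
        ((totalDegree_X_pow_le i _).trans (min_le_left _ _)))

noncomputable def booleanSystem (F : Finset (MvPolynomial (Fin n) ℂ)) :
    F.image squarefreePart ⊕ Fin n → MvPolynomial (Fin n) ℂ :=
  Sum.elim Subtype.val fun i => X i ^ 2 - X i

theorem range_booleanSystem (F : Finset (MvPolynomial (Fin n) ℂ)) :
    Set.range (booleanSystem F) =
      ↑(F.image squarefreePart) ∪ {p | ∃ i : Fin n, p = X i ^ 2 - X i} := by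
  ext p
  simp [booleanSystem, eq_comm]

theorem hasDegreeLERep_C_eval_mul_boolIndicator {F : Finset (MvPolynomial (Fin n) ℂ)}
    {r : MvPolynomial (Fin n) ℂ} (hr : r ∈ Ideal.span (Set.range (booleanSystem F)))
    (v : Fin n → Bool) :
    HasDegreeLERep (booleanSystem F) (2 * n) (C (eval (boolPoint v) r) * boolIndicator v) := by
  by_cases hrv : eval (boolPoint v) r = 0
  · rw [hrv, map_zero, zero_mul]
    exact .zero
  obtain ⟨⟨p, hp⟩ | i, hpv⟩ := exists_eval_ne_zero_of_mem_span hr hrv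
  swap
  · exact absurd (eval_boolPoint_X_sq_sub_X v i) hpv
  have hpn : p.totalDegree ≤ n := by
    obtain ⟨f, -, rfl⟩ := Finset.mem_image.mp hp
    exact totalDegree_squarefreePart_le f
  have hχn : (boolIndicator v : MvPolynomial (Fin n) ℂ).totalDegree ≤ n := by
    simpa using totalDegree_boolIndicator_le (R := ℂ) v
  have hgen : HasDegreeLERep (booleanSystem F) (2 * n) (boolIndicator v * p) :=
    .of_dvd (Sum.inl ⟨p, hp⟩) (dvd_mul_left _ _) ((totalDegree_mul _ _).trans (by omega))
  have hfield : HasDegreeLERep (booleanSystem F) (2 * n)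
      (p * boolIndicator v - C (eval (boolPoint v) p) * boolIndicator v) :=
    ((hasDegreeLERep_mul_boolIndicator_sub v p).comp (booleanSystem F) Sum.inr).mono
      (by simp; omega)
  convert (hgen.sub hfield).C_mul (eval (boolPoint v) r / eval (boolPoint v) p) using 1
  rw [show boolIndicator v * p - (p * boolIndicator v - C (eval (boolPoint v) p) * boolIndicator v)
    = C (eval (boolPoint v) p) * boolIndicator v by ring, ← mul_assoc, ← C_mul,
    div_mul_cancel₀ _ (show eval (boolPoint v) p ≠ 0 from hpv)]

theorem hasDegreeLERep_booleanSystem_of_mem_span {F : Finset (MvPolynomial (Fin n) ℂ)}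
    {f : MvPolynomial (Fin n) ℂ} (hf : f ∈ Ideal.span (Set.range (booleanSystem F))) {D : ℕ}
    (hfD : f.totalDegree ≤ D) (hnD : 2 * n ≤ D) : HasDegreeLERep (booleanSystem F) D f := by
  set r := squarefreePart f
  have hfr : HasDegreeLERep (booleanSystem F) f.totalDegree (f - r) :=
    (hasDegreeLERep_sub_squarefreePart f).comp (booleanSystem F) Sum.inr
  have hr : r ∈ Ideal.span (Set.range (booleanSystem F)) := by
    simpa using Ideal.sub_mem _ hf hfr.mem_span
  have hrn : r.totalDegree ≤ n := totalDegree_squarefreePart_le f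
  have hf_eq : f = (f - r) +
      ∑ v, (r * boolIndicator v - C (eval (boolPoint v) r) * boolIndicator v) +
      ∑ v, C (eval (boolPoint v) r) * boolIndicator v := by
    rw [Finset.sum_sub_distrib, ← Finset.mul_sum, sum_boolIndicator]
    ring
  rw [hf_eq]
  refine ((hfr.mono hfD).add (.sum _ fun v _ => ?_)).add
    (.sum _ fun v _ => (hasDegreeLERep_C_eval_mul_boolIndicator hr v).mono hnD)
  exact ((hasDegreeLERep_mul_boolIndicator_sub v r).comp (booleanSystem F) Sum.inr).mono
    (by simp; omega)

end BooleanSystem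

/-- The complete solving degree of `F_B ∪ H_X` is at most `3n`: for every element `h` of
the reduced DRL Gröbner basis of the ideal generated by `S = F_B ∪ {x_i² - x_i}` and every
monomial `m` with `deg(m·h) ≤ 3n`, `m·h` has a representation over `S` with all summands
of degree at most `3n`. -/
theorem complete_solving_degree_boolean_bound
    (n : ℕ) (F : Finset (MvPolynomial (Fin n) ℂ)) :
    ∀ G : Finset (MvPolynomial (Fin n) ℂ),
      IsReducedGB (Ideal.span
          ((↑(F.image squarefreePart) : Set (MvPolynomial (Fin n) ℂ)) ∪
            {p : MvPolynomial (Fin n) ℂ | ∃ i : Fin n, p = X i ^ 2 - X i})) G →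
      ∀ h ∈ G, ∀ m : Fin n →₀ ℕ,
        (monomial m (1:ℂ) * h).totalDegree ≤ 3 * n →
        ∃ (a : F.image squarefreePart → MvPolynomial (Fin n) ℂ)
          (b : Fin n → MvPolynomial (Fin n) ℂ),
          monomial m (1:ℂ) * h =
              (∑ p : F.image squarefreePart, a p * (p : MvPolynomial (Fin n) ℂ)) +
                ∑ i, b i * (X i ^ 2 - X i) ∧
          (∀ p : F.image squarefreePart,
            (a p * (p : MvPolynomial (Fin n) ℂ)).totalDegree ≤ 3 * n) ∧
          (∀ i, (b i * (X i ^ 2 - X i)).totalDegree ≤ 3 * n) := by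
  intro G hG h hh m hdeg
  have hmem := Ideal.mul_mem_left _ (monomial m (1:ℂ)) (hG.1.1 hh)
  rw [← range_booleanSystem] at hmem
  obtain ⟨c, hc, hcD⟩ := hasDegreeLERep_booleanSystem_of_mem_span hmem hdeg (by omega)
  refine ⟨fun p => c (.inl p), fun i => c (.inr i), ?_, fun p => hcD _, fun i => hcD _⟩
  rw [hc, Fintype.sum_sum_type]
  rfl
end

section
/- Let F = {f_1,...,f_r} be a set of Boolean polynomials in R_2[x_1,...,x_n] with t_i = #f_i, and fix s ≥ 3. Then the splitting system S(F,s) = ∪_i S(f_i,s) is s-sparse, consists of r + Σ_i ⌈(t_i - s)/(s-2)⌉ polynomials (with the convention ⌈e⌉ = 0 for e ≤ 0), involves n + Σ_i ⌈(t_i - s)/(s-2)⌉ variables, and satisfies proj_X V_{F_2}(S(F,s)) = V_{F_2}(F). -/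
/-!
Cut the `t` monomials of `f` into consecutive chunks `q₀, …, q_K` (of sizes `s - 1`, `s - 2`, …,
`s - 2`, at most `s - 1`) and chain them through new variables: `P_j = q_j + u_{j-1} + u_j`.
Every `u_j` occurs in exactly two of the `P_j`, so over a ring of characteristic `2` the `P_j` sum
to `f`, and any zero of all `P_j` is a zero of `f`. Conversely, at a zero `a` of `f`, putting
`u_j := (q₀ + ⋯ + q_j)(a)` solves every `P_j`.
-/

open MvPolynomial Finset

variable {R σ : Type*} [CommSemiring R]

/-- The paper's `proj_X V(P)`: the `x`-parts of the common zeros of `P` in `x` and new variables. -/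
def projSolutions {J V : Type*} (P : J → MvPolynomial (σ ⊕ V) R) : Set (σ → R) :=
  {a | ∃ b : V → R, ∀ j, eval (Sum.elim a b) (P j) = 0}

theorem card_support_rename_of_injective {τ : Type*} {f : σ → τ} (hf : f.Injective)
    (p : MvPolynomial σ R) : #(rename f p).support = #p.support := by
  classical
  rw [support_rename_of_injective hf, card_image_of_injective _ (Finsupp.mapDomain_injective hf)]

theorem card_support_add_le (p q : MvPolynomial σ R) :
    #(p + q).support ≤ #p.support + #q.support := by
  classical
  exact (card_le_card support_add).trans (card_union_le _ _)

theorem card_support_monomial_le (m : σ →₀ ℕ) (a : R) : #(monomial m a).support ≤ 1 :=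
  (card_le_card support_monomial_subset).trans (card_singleton m).le

theorem eval_sumElim_rename_sumMap_id {V W : Type*} (a : σ → R) (b : W → R) (e : V → W)
    (p : MvPolynomial (σ ⊕ V) R) :
    eval (Sum.elim a b) (rename (Sum.map id e) p) = eval (Sum.elim a (b ∘ e)) p := by
  rw [eval_rename, Sum.elim_comp_map, Function.comp_id]

section projSolutions

variable {J V : Type*}

theorem projSolutions_comp_of_surjective {J' : Type*} (P : J → MvPolynomial (σ ⊕ V) R)
    {f : J' → J} (hf : f.Surjective) : projSolutions (P ∘ f) = projSolutions P := by
  ext a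
  exact exists_congr fun b => (hf.forall (p := fun j => eval (Sum.elim a b) (P j) = 0)).symm

theorem projSolutions_rename_equiv {W : Type*} (P : J → MvPolynomial (σ ⊕ V) R) (e : V ≃ W) :
    projSolutions (fun j => rename (Sum.map id e) (P j)) = projSolutions P := by
  ext a
  simp only [projSolutions, Set.mem_ofPred_eq, eval_sumElim_rename_sumMap_id]
  constructor
  · rintro ⟨b, hb⟩
    exact ⟨b ∘ e, hb⟩
  · rintro ⟨b, hb⟩
    refine ⟨b ∘ e.symm, fun j => ?_⟩
    simpa [Function.comp_def] using hb j

/-- The union `S(F, s) = ⋃ᵢ S(fᵢ, s)`, each `S(fᵢ, s)` keeping its own new variables. -/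
noncomputable def sigmaSystem {ι : Type*} {J V : ι → Type*}
    (P : ∀ i, J i → MvPolynomial (σ ⊕ V i) R) :
    (Σ i, J i) → MvPolynomial (σ ⊕ Σ i, V i) R :=
  fun p => rename (Sum.map id (Sigma.mk p.1)) (P p.1 p.2)

theorem projSolutions_sigmaSystem {ι : Type*} {J V : ι → Type*}
    (P : ∀ i, J i → MvPolynomial (σ ⊕ V i) R) :
    projSolutions (sigmaSystem P) = ⋂ i, projSolutions (P i) := by
  ext a
  simp only [projSolutions, sigmaSystem, Set.mem_iInter, Set.mem_ofPred_eq, Sigma.forall,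
    eval_sumElim_rename_sumMap_id]
  constructor
  · rintro ⟨b, hb⟩ i
    exact ⟨b ∘ Sigma.mk i, hb i⟩
  · intro h
    choose b hb using h
    exact ⟨fun v => b v.1 v.2, hb⟩

end projSolutions

section Chain

variable (K : ℕ)

/-- `linkVar K (k + 1)` is the new variable `u_k` for `k < K`; all other values are `0`. -/
noncomputable def linkVar : ℕ → MvPolynomial (σ ⊕ Fin K) R
  | 0 => 0
  | k + 1 => if h : k < K then X (Sum.inr ⟨k, h⟩) else 0

/-- The chain `q_j + u_{j-1} + u_j` of the paper's `S(f, s)`, for `f = q₀ + ⋯ + q_K`. -/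
noncomputable def chainSplit (q : ℕ → MvPolynomial σ R) (j : ℕ) : MvPolynomial (σ ⊕ Fin K) R :=
  rename Sum.inl (q j) + linkVar K j + linkVar K (j + 1)

theorem card_support_linkVar_le (k : ℕ) :
    #(linkVar (σ := σ) (R := R) K k).support ≤ if k = 0 ∨ K < k then 0 else 1 := by
  rcases k with _ | k
  · simp [linkVar]
  · by_cases h : k < K
    · rw [linkVar, dif_pos h, if_neg (by omega)]
      exact card_support_monomial_le _ _
    · simp [linkVar, h]

theorem card_support_chainSplit_le (q : ℕ → MvPolynomial σ R) {j : ℕ} (hj : j ≤ K) :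
    #(chainSplit K q j).support
      ≤ #(q j).support + (if j = 0 then 0 else 1) + (if j < K then 1 else 0) := by
  have h₁ := card_support_linkVar_le (σ := σ) (R := R) K j
  have h₂ := card_support_linkVar_le (σ := σ) (R := R) K (j + 1)
  calc #(chainSplit K q j).support
      ≤ #(rename Sum.inl (q j)).support + #(linkVar K j).support
          + #(linkVar K (j + 1)).support :=
        (card_support_add_le _ _).trans (Nat.add_le_add_right (card_support_add_le _ _) _)
    _ ≤ _ := by
        rw [card_support_rename_of_injective Sum.inl_injective]
        split_ifs at h₁ h₂ ⊢ <;> omega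

theorem eval_linkVar_succ (a : σ → R) (b : Fin K → R) (k : ℕ) :
    eval (Sum.elim a b) (linkVar K (k + 1)) = if h : k < K then b ⟨k, h⟩ else 0 := by
  by_cases h : k < K <;> simp [linkVar, h]

variable [CharP R 2]

theorem sum_chainSplit (q : ℕ → MvPolynomial σ R) :
    ∑ j ∈ range (K + 1), chainSplit K q j = rename Sum.inl (∑ j ∈ range (K + 1), q j) := by
  have links : ∑ j ∈ range (K + 1), (linkVar (σ := σ) (R := R) K j + linkVar K (j + 1)) = 0 := by
    have hK : linkVar (σ := σ) (R := R) K (K + 1) = 0 := by simp [linkVar]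
    rw [sum_add_distrib, sum_range_succ', sum_range_succ _ K, hK, show linkVar K 0 = 0 from rfl,
      add_zero, CharTwo.add_self_eq_zero]
  simp only [chainSplit, add_assoc, sum_add_distrib, map_sum, links, add_zero]

theorem projSolutions_chainSplit (q : ℕ → MvPolynomial σ R) :
    projSolutions (fun j : Fin (K + 1) => chainSplit K q j)
      = {a | eval a (∑ j ∈ range (K + 1), q j) = 0} := by
  ext a
  constructor
  · rintro ⟨b, hb⟩
    change eval a _ = 0
    rw [← Sum.elim_comp_inl a b, ← eval_rename, ← sum_chainSplit, map_sum,
      ← Fin.sum_univ_eq_sum_range (fun j => eval _ (chainSplit K q j))]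
    exact sum_eq_zero fun j _ => hb j
  · intro h
    set G : ℕ → R := fun n => ∑ i ∈ range n, eval a (q i)
    refine ⟨fun k => G (k + 1), fun j => ?_⟩
    have hlink : ∀ i ≤ K, eval (Sum.elim a fun k : Fin K => G (k + 1)) (linkVar K i) = G i := by
      rintro (_ | i) hi
      · simp [linkVar, G]
      · rw [eval_linkVar_succ, dif_pos (by omega)]
    dsimp only
    rw [chainSplit, map_add, map_add, eval_rename, Sum.elim_comp_inl, hlink j (by omega)]
    rcases (Nat.lt_succ_iff.mp j.isLt).lt_or_eq with hj | hj
    · rw [hlink (j + 1) hj, show G (j + 1) = G j + eval a (q j) from sum_range_succ ..,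
        add_comm (G j)]
      exact CharTwo.add_self_eq_zero _
    · rw [hj, eval_linkVar_succ, dif_neg (lt_irrefl K), add_zero, add_comm, ← sum_range_succ,
        ← map_sum]
      exact h

end Chain

section Chunks

variable {ι : Type*} [Fintype ι]

noncomputable def chunkPoly (m : ι → σ →₀ ℕ) (c : ι → ℕ) (j : ℕ) : MvPolynomial σ R :=
  ∑ k with c k = j, monomial (m k) 1

theorem sum_chunkPoly (m : ι → σ →₀ ℕ) {c : ι → ℕ} {K : ℕ} (hc : ∀ k, c k ≤ K) :
    ∑ j ∈ range (K + 1), chunkPoly m c j = ∑ k, monomial (m k) (1 : R) :=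
  sum_fiberwise_of_maps_to (fun k _ => mem_range_succ_iff.mpr (hc k)) _

theorem card_support_chunkPoly_le (m : ι → σ →₀ ℕ) (c : ι → ℕ) (j : ℕ) :
    #(chunkPoly (R := R) m c j).support ≤ #{k | c k = j} := by
  classical
  refine (card_le_card support_sum).trans (card_biUnion_le.trans ?_)
  simpa using sum_le_card_nsmul _ _ 1 fun k _ => card_support_monomial_le (m k) (1 : R)

end Chunks

/-- Chunk `0` gets the positions `0, …, s - 2`, chunk `j` the positions
`j(s-2) + 1, …, (j+1)(s-2)`, and the last chunk `K` everything from `K(s-2) + 1` on. -/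
def chunkIndex (s K k : ℕ) : ℕ := min K ((k - 1) / (s - 2))

theorem chunkIndex_le (s K k : ℕ) : chunkIndex s K k ≤ K :=
  min_le_left _ _

theorem card_chunkIndex_fiber_add_le {s t K j : ℕ} (hs : 3 ≤ s) (ht : t ≤ s + K * (s - 2))
    (hj : j ≤ K) :
    #{k : Fin t | chunkIndex s K k = j} + (if j = 0 then 0 else 1) + (if j < K then 1 else 0)
      ≤ s := by
  have hq : 0 < s - 2 := by omega
  have hjq : j ≠ 0 → 1 ≤ j * (s - 2) := fun h => Nat.mul_pos (by omega) hq
  have hfiber : #{k : Fin t | chunkIndex s K k = j} ≤ #(Ico (if j = 0 then 0 else j * (s - 2) + 1)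
      (if j < K then j * (s - 2) + (s - 2) + 1 else t)) := by
    refine card_le_card_of_injOn Fin.val (fun k hk => ?_) Fin.val_injective.injOn
    replace hk : min K ((k - 1) / (s - 2)) = j := (mem_filter.1 (mem_coe.1 hk)).2
    have hlo : j * (s - 2) ≤ k - 1 := (Nat.le_div_iff_mul_le hq).1 (hk ▸ min_le_right _ _)
    simp only [coe_Ico, Set.mem_Ico]
    refine ⟨by split_ifs <;> omega, ?_⟩
    split_ifs with hjK
    · have hhi := (Nat.div_lt_iff_lt_mul hq).1 (by omega : (k - 1) / (s - 2) < j + 1)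
      rw [add_mul, one_mul] at hhi
      omega
    · exact k.isLt
  rw [Nat.card_Ico] at hfiber
  have hj0 : j = 0 → j * (s - 2) = 0 := fun h => by simp [h]
  have hjK : j = K → j * (s - 2) = K * (s - 2) := fun h => h ▸ rfl
  generalize j * (s - 2) = P at *
  generalize K * (s - 2) = Q at *
  split_ifs at hfiber ⊢ <;> omega

/-- The paper's `S_t = ⌈(t - s)/(s - 2)⌉` (`0` when `t ≤ s`), in truncated subtraction. -/
def splitLength (s t : ℕ) : ℕ := (t - s + (s - 3)) / (s - 2)

theorem le_add_splitLength_mul {s : ℕ} (hs : 3 ≤ s) (t : ℕ) :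
    t ≤ s + splitLength s t * (s - 2) := by
  have := Nat.lt_div_mul_add (a := t - s + (s - 3)) (b := s - 2) (by omega)
  rw [splitLength]
  omega

/-- The paper's `S(f, s)` for `f = ∑_{m ∈ T} m`. -/
noncomputable def splitting (s : ℕ) (T : Finset (σ →₀ ℕ)) :
    Fin (splitLength s #T + 1) → MvPolynomial (σ ⊕ Fin (splitLength s #T)) R :=
  fun j => chainSplit (splitLength s #T)
    (chunkPoly (fun k => (T.equivFin.symm k : σ →₀ ℕ))
      (fun k => chunkIndex s (splitLength s #T) k)) j

theorem card_support_splitting_le {s : ℕ} (hs : 3 ≤ s) (T : Finset (σ →₀ ℕ))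
    (j : Fin (splitLength s #T + 1)) : #(splitting (R := R) s T j).support ≤ s := by
  have hj : (j : ℕ) ≤ splitLength s #T := Nat.lt_succ_iff.mp j.isLt
  refine (card_support_chainSplit_le _ _ hj).trans (le_trans ?_
    (card_chunkIndex_fiber_add_le hs (le_add_splitLength_mul hs _) hj))
  gcongr
  exact card_support_chunkPoly_le ..

theorem projSolutions_splitting [CharP R 2] (s : ℕ) (T : Finset (σ →₀ ℕ)) :
    projSolutions (splitting (R := R) s T) = {a | eval a (∑ m ∈ T, monomial m 1) = 0} := by
  unfold splitting
  rw [projSolutions_chainSplit, sum_chunkPoly _ fun k => chunkIndex_le ..,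
    Equiv.sum_comp T.equivFin.symm (fun m => monomial (m : σ →₀ ℕ) (1 : R))]
  simp only [sum_coe_sort T fun m => monomial m (1 : R)]

theorem splitting_system_properties_general
    (n r s : ℕ) (hs : 3 ≤ s) (M : Fin r → Finset (Fin n →₀ ℕ)) :
    ∃ S : Fin (r + ∑ i, (((M i).card - s) + (s - 3)) / (s - 2)) →
        MvPolynomial (Fin n ⊕ Fin (∑ i, (((M i).card - s) + (s - 3)) / (s - 2))) (ZMod 2),
      (∀ j, (S j).support.card ≤ s) ∧
      ({a : Fin n → ZMod 2 |
          ∃ b : Fin (∑ i, (((M i).card - s) + (s - 3)) / (s - 2)) → ZMod 2,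
            ∀ j, eval (Sum.elim a b) (S j) = 0}
        = {a : Fin n → ZMod 2 | ∀ i, eval a (∑ m ∈ M i, monomial m (1 : ZMod 2)) = 0}) := by
  classical
  have e₁ : (Σ i, Fin (splitLength s #(M i))) ≃ Fin (∑ i, (#(M i) - s + (s - 3)) / (s - 2)) :=
    Fintype.equivFinOfCardEq (by simp only [Fintype.card_sigma, Fintype.card_fin]; rfl)
  have e₂ : (Σ i, Fin (splitLength s #(M i) + 1))
      ≃ Fin (r + ∑ i, (#(M i) - s + (s - 3)) / (s - 2)) :=
    Fintype.equivFinOfCardEq (by simp [splitLength, sum_add_distrib, add_comm])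
  let S := fun i => splitting (R := ZMod 2) s (M i)
  refine ⟨fun j => rename (Sum.map id e₁) (sigmaSystem S (e₂.symm j)), fun j => ?_, ?_⟩
  · dsimp only
    rw [card_support_rename_of_injective
        (Sum.map_injective.2 ⟨Function.injective_id, e₁.injective⟩),
      sigmaSystem, card_support_rename_of_injective
        (Sum.map_injective.2 ⟨Function.injective_id, sigma_mk_injective⟩)]
    exact card_support_splitting_le hs _ _
  · change projSolutions (fun j => rename (Sum.map id e₁) ((sigmaSystem S ∘ e₂.symm) j)) = _
    rw [projSolutions_rename_equiv, projSolutions_comp_of_surjective _ e₂.symm.surjective,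
      projSolutions_sigmaSystem]
    ext a
    simp [S, projSolutions_splitting]

/-- Splitting a system of Boolean polynomials `f_i = Σ_{m ∈ M i} m` (each a sum of
`t_i = #(M i)` distinct squarefree monomials): there is an `s`-sparse system `S(F,s)` of
`r + Σ_i ⌈(t_i - s)/(s-2)⌉` polynomials in `n + Σ_i ⌈(t_i - s)/(s-2)⌉` variables (with
`⌈e⌉ = 0` for `e ≤ 0`) whose solution set over `F_2`, projected to the `X`-coordinates,
equals the solution set of `F`. -/
theorem splitting_system_properties
    (n r s : ℕ) (hs : 3 ≤ s) (M : Fin r → Finset (Fin n →₀ ℕ))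
    (hsf : ∀ i, ∀ m ∈ M i, ∀ j, m j ≤ 1) :
    ∃ S : Fin (r + ∑ i, (((M i).card - s) + (s - 3)) / (s - 2)) →
        MvPolynomial (Fin n ⊕ Fin (∑ i, (((M i).card - s) + (s - 3)) / (s - 2))) (ZMod 2),
      (∀ j, (S j).support.card ≤ s) ∧
      ({a : Fin n → ZMod 2 |
          ∃ b : Fin (∑ i, (((M i).card - s) + (s - 3)) / (s - 2)) → ZMod 2,
            ∀ j, eval (Sum.elim a b) (S j) = 0}
        = {a : Fin n → ZMod 2 | ∀ i, eval a (∑ m ∈ M i, monomial m (1 : ZMod 2)) = 0}) :=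
  splitting_system_properties_general n r s hs M
end
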